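/- arXiv:1305.2731 — 4 statements merged into one kernel-verified Lean document; each statement's English description precedes it below -/
import Mathlib

section
/- For every prime p, the central binomial-type coefficient C(2p − 2, p − 1) is divisible by p, and the quotient C(2p − 2, p − 1)/p is congruent to −1 modulo p. -/
/-!
With `m = p - 1`, `(2m + 1) C(2m, m) = p C(2m + 1, p)`, so the quotient `q = C(2m, m) / p`
satisfies `(2m + 1) q = C(2m + 1, p)`. Modulo `p` the left side is `-q`, and by Lucas's theorem
the right side is `⌊(2p - 1) / p⌋ = 1`.
-/

-- Lucas's theorem: the only nonzero base-`p` digit of `p` is a `1`.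
theorem Choose.choose_prime_modEq_div {p : ℕ} [Fact p.Prime] (n : ℕ) :
    n.choose p ≡ n / p [MOD p] := by
  grw [Choose.choose_modEq_choose_mod_mul_choose_div_nat]
  simp [Nat.div_self (Fact.out : p.Prime).pos, Nat.ModEq.refl]

/-- For any prime `p`, `p ∣ C(2p − 2, p − 1)` and `C(2p − 2, p − 1)/p ≡ −1 (mod p)`. -/
theorem central_binom_div_prime {p : ℕ} (hp : p.Prime) :
    p ∣ Nat.choose (2 * p - 2) (p - 1) ∧
      ((Nat.choose (2 * p - 2) (p - 1) / p : ℕ) : ZMod p) = -1 := by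
  have : Fact p.Prime := ⟨hp⟩
  obtain ⟨m, rfl⟩ : ∃ m, p = m + 1 := ⟨p - 1, by have := hp.pos; omega⟩
  rw [show 2 * (m + 1) - 2 = 2 * m by omega, Nat.add_sub_cancel]
  have hdvd : m + 1 ∣ (2 * m).choose m := by
    have := hp.two_le
    exact hp.dvd_choose (by omega) (by omega) (by omega)
  refine ⟨hdvd, ?_⟩
  have hchoose : (2 * m + 1) * ((2 * m).choose m / (m + 1)) = (2 * m + 1).choose (m + 1) := by
    refine Nat.eq_of_mul_eq_mul_right (Nat.succ_pos m) ?_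
    rw [mul_assoc, Nat.div_mul_cancel hdvd, Nat.add_one_mul_choose_eq]
  have hlucas : ((2 * m + 1).choose (m + 1) : ZMod (m + 1)) = 1 := by
    rw [(ZMod.natCast_eq_natCast_iff _ _ _).mpr (Choose.choose_prime_modEq_div _),
      Nat.div_eq_of_lt_le (k := 1) (by omega) (by omega), Nat.cast_one]
  have hodd : ((2 * m + 1 : ℕ) : ZMod (m + 1)) = -1 := by
    rw [eq_neg_iff_add_eq_zero, ← Nat.cast_add_one, show 2 * m + 1 + 1 = 2 * (m + 1) by ring]
    simp
  have := congrArg (Nat.cast : ℕ → ZMod (m + 1)) hchoose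
  rw [Nat.cast_mul, hodd, hlucas] at this
  linear_combination -this
end

section
/- For every prime p and every integer n ≥ 2, the binomial coefficient C(2pⁿ − 2, pⁿ − 1) is divisible by p². -/
theorem Nat.sub_one_mod_of_dvd {a b : ℕ} (hab : a ∣ b) (hb : 0 < b) : (b - 1) % a = a - 1 := by
  obtain ⟨c, rfl⟩ := hab
  have ha : 0 < a := Nat.pos_of_mul_pos_right hb
  have hc : 0 < c := Nat.pos_of_mul_pos_left hb
  have hsplit : a * c - 1 = a * (c - 1) + (a - 1) := by
    rw [Nat.mul_sub_one, ← Nat.add_sub_assoc (Nat.one_le_iff_ne_zero.mpr ha.ne'),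
      Nat.sub_add_cancel (Nat.le_mul_of_pos_right a hc)]
  rw [hsplit, Nat.mul_add_mod, Nat.mod_eq_of_lt (Nat.sub_lt ha one_pos)]

/-- In base `p`, `pⁿ - 1` has `n` digits, all equal to `p - 1`, so adding it to itself carries
at every digit, and Kummer's theorem counts these carries. -/
theorem padicValNat_choose_two_mul_pow_sub_one {p : ℕ} [hp : Fact p.Prime] (n : ℕ) :
    padicValNat p (Nat.choose (2 * (p ^ n - 1)) (p ^ n - 1)) = n := by
  have hp2 := hp.out.two_le
  have hpow : 0 < p ^ n := pow_pos hp.out.pos n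
  have hlog : Nat.log p ((p ^ n - 1) + (p ^ n - 1)) < n + 1 :=
    Nat.log_lt_of_lt_pow' n.succ_ne_zero <| calc
      (p ^ n - 1) + (p ^ n - 1) < p ^ n * 2 := by omega
      _ ≤ p ^ (n + 1) := by rw [pow_succ]; exact Nat.mul_le_mul_left _ hp2
  rw [two_mul, padicValNat_choose' hlog, Finset.filter_true_of_mem, Nat.card_Ico,
    Nat.add_sub_cancel]
  intro i hi
  rw [Finset.mem_Ico] at hi
  have hpi : p ≤ p ^ i := Nat.le_self_pow (by omega) p
  rw [Nat.sub_one_mod_of_dvd (pow_dvd_pow p (by omega)) hpow]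
  omega

/-- For any prime `p` and `n ≥ 2`, `p² ∣ C(2pⁿ − 2, pⁿ − 1)`. -/
theorem prime_sq_dvd_central_binom {p n : ℕ} (hp : p.Prime) (hn : 2 ≤ n) :
    p ^ 2 ∣ Nat.choose (2 * p ^ n - 2) (p ^ n - 1) := by
  have : Fact p.Prime := ⟨hp⟩
  rw [← Nat.mul_sub_one, padicValNat_dvd_iff_le (Nat.choose_pos (by omega)).ne',
    padicValNat_choose_two_mul_pow_sub_one]
  exact hn
end

section
/- Let R be a commutative ring, v ∈ R a unit, and p ≥ 2 an integer. Let A be the free R-module with basis b₀, …, b_{p−1}, with R-bilinear product determined by: b_{p−1}·b_{p−1} = v·b_{p−1} − v²·b₀; bᵢ·bⱼ = v·b_{i+j−(p−1)} if p − 1 ≤ i + j < 2p − 2; and bᵢ·bⱼ = 0 if i + j < p − 1. Then this product is commutative and the element v⁻¹·b_{p−1} + b₀ is a two-sided identity for it. -/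
/-- The bilinear product on the free `R`-module with basis `b₀, …, b_{p−1}` determined by
`b_{p−1}·b_{p−1} = v·b_{p−1} − v²·b₀`, `bᵢ·bⱼ = v·b_{i+j−(p−1)}` if
`p − 1 ≤ i + j < 2p − 2`, and `bᵢ·bⱼ = 0` if `i + j < p − 1`.
An element is a coefficient function `Fin p → R`. -/
def mulB {R : Type*} [CommRing R] (v : R) (p : ℕ) (a b : Fin p → R) : Fin p → R :=
  fun k =>
    v * (∑ i : Fin p, ∑ j : Fin p,
      if (i : ℕ) + (j : ℕ) = (k : ℕ) + (p - 1) then a i * b j else 0)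
    - (if (k : ℕ) = 0 then
        v ^ 2 * ∑ i : Fin p, ∑ j : Fin p,
          if (i : ℕ) = p - 1 ∧ (j : ℕ) = p - 1 then a i * b j else 0
      else 0)

/-!
Write the product through its structure constants `bᵢ·bⱼ = ∑ₖ c(i,j,k) bₖ`. Commutativity is the
symmetry of `c` in `i, j`. For the unit `e = w·b_{p−1} + b₀` it suffices that
`w·c(p−1,j,k) + c(0,j,k) = δⱼₖ`: left multiplication by `b_{p−1}` is `v` times the identity
except for the correction `−v²·b₀` on `b_{p−1}`, and this is cancelled by `b₀·b_{p−1} = v·b₀`.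
-/

theorem Fin.sum_ite_val_eq {M : Type*} [AddCommMonoid M] {p : ℕ} (f : Fin p → M) (m : ℕ) :
    (∑ j : Fin p, if (j : ℕ) = m then f j else 0) = if h : m < p then f ⟨m, h⟩ else 0 := by
  split_ifs with h
  · convert (Finset.sum_ite_eq' Finset.univ (⟨m, h⟩ : Fin p) f).trans
      (if_pos (Finset.mem_univ _)) using 3
    simp [Fin.ext_iff]
  · exact Finset.sum_eq_zero fun j _ => if_neg fun hj : (j : ℕ) = m => h (hj ▸ j.isLt)

section mulB

variable {R : Type*} [CommRing R] (v : R) (p : ℕ)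

def mulBCoeff (i j k : Fin p) : R :=
  (if (i : ℕ) + j = k + (p - 1) then v else 0) -
    if (k : ℕ) = 0 ∧ (i : ℕ) = p - 1 ∧ (j : ℕ) = p - 1 then v ^ 2 else 0

theorem mulBCoeff_comm (i j k : Fin p) : mulBCoeff v p i j k = mulBCoeff v p j i k := by
  simp only [mulBCoeff, add_comm (i : ℕ), and_comm (a := (i : ℕ) = p - 1)]

theorem mulB_eq_sum_mulBCoeff (a b : Fin p → R) (k : Fin p) :
    mulB v p a b k = ∑ i, ∑ j, a i * b j * mulBCoeff v p i j k := by
  simp only [mulB, mulBCoeff, mul_sub, Finset.sum_sub_distrib, Finset.mul_sum]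
  congr 1
  · refine Finset.sum_congr rfl fun i _ => Finset.sum_congr rfl fun j _ => ?_
    split_ifs <;> ring
  · split_ifs with hk
    · refine Finset.sum_congr rfl fun i _ => Finset.sum_congr rfl fun j _ => ?_
      simp only [hk, true_and]
      split_ifs <;> ring
    · simp [hk]

theorem mulB_comm (a b : Fin p → R) : mulB v p a b = mulB v p b a := by
  funext k
  rw [mulB_eq_sum_mulBCoeff, mulB_eq_sum_mulBCoeff, Finset.sum_comm]
  simp only [mulBCoeff_comm v p _ _ k, mul_comm (a _)]

variable {v} {p}

def mulBOne (w : R) (p : ℕ) : Fin p → R :=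
  fun k => (if (k : ℕ) = p - 1 then w else 0) + (if (k : ℕ) = 0 then 1 else 0)

theorem sum_mulBOne_mul (w : R) (hp : 0 < p) (f : Fin p → R) :
    ∑ i, mulBOne w p i * f i = w * f ⟨p - 1, by omega⟩ + f ⟨0, hp⟩ := by
  simp only [mulBOne, add_mul, ite_mul, one_mul, zero_mul, Finset.sum_add_distrib,
    Fin.sum_ite_val_eq, dif_pos hp, dif_pos (Nat.sub_one_lt_of_lt hp)]

theorem sum_mulBOne_mul_mulBCoeff {w : R} (hw : v * w = 1) (hp : 2 ≤ p) (j k : Fin p) :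
    ∑ i, mulBOne w p i * mulBCoeff v p i j k = if j = k then 1 else 0 := by
  have := j.isLt
  simp only [sum_mulBOne_mul w (by omega : 0 < p), mulBCoeff, Fin.ext_iff, true_and]
  split_ifs <;> first | omega | linear_combination (-v) * hw | linear_combination hw | ring

theorem mulB_mulBOne_left {w : R} (hw : v * w = 1) (hp : 2 ≤ p) (a : Fin p → R) :
    mulB v p (mulBOne w p) a = a := by
  funext k
  calc mulB v p (mulBOne w p) a k
      = ∑ j, a j * ∑ i, mulBOne w p i * mulBCoeff v p i j k := by
        rw [mulB_eq_sum_mulBCoeff, Finset.sum_comm]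
        simp only [Finset.mul_sum, mul_left_comm, mul_assoc]
    _ = a k := by simp [sum_mulBOne_mul_mulBCoeff hw hp]

end mulB

/-- The product `mulB` is commutative, and (for `v` a unit with inverse `w`)
`v⁻¹·b_{p−1} + b₀` is a two-sided identity for it. -/
theorem mulB_comm_one {R : Type*} [CommRing R] (v w : R) (p : ℕ) (hp : 2 ≤ p)
    (hw : v * w = 1) :
    (∀ a b : Fin p → R, mulB v p a b = mulB v p b a) ∧
    (∀ a : Fin p → R,
      mulB v p (fun k => (if (k : ℕ) = p - 1 then w else 0) +
        (if (k : ℕ) = 0 then 1 else 0)) a = a ∧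
      mulB v p a (fun k => (if (k : ℕ) = p - 1 then w else 0) +
        (if (k : ℕ) = 0 then 1 else 0)) = a) :=
  ⟨mulB_comm v p, fun a => ⟨mulB_mulBOne_left hw hp a,
    (mulB_comm v p _ _).trans (mulB_mulBOne_left hw hp a)⟩⟩
end

section
/- Let K be a commutative ring, M ≥ 1, R = K[x]/(x^M) and S = K[x₁,x₂]/(x₁^M, x₂^M). Regard R as an S-module via the K-algebra map Δ*: S → R sending both x₁ and x₂ to x. Suppose f : R → S is an S-module homomorphism (i.e. f(Δ*(s)·r) = s·f(r) for all s ∈ S, r ∈ R). Then for every r ∈ R, when f(r) is written in the monomial basis {x₁^i x₂^j : 0 ≤ i, j ≤ M−1} of S, the coefficient of x₁^i x₂^j vanishes whenever i + j ≤ M − 2. -/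
open MvPolynomial Polynomial

/-- `S = K[x₁,x₂]/(x₁^M, x₂^M)`. -/
abbrev Squot (K : Type*) [CommRing K] (M : ℕ) :=
  MvPolynomial (Fin 2) K ⧸ Ideal.span
    {(X 0 : MvPolynomial (Fin 2) K) ^ M, (X 1 : MvPolynomial (Fin 2) K) ^ M}

/-- `R = K[x]/(x^M)`. -/
abbrev Rquot (K : Type*) [CommRing K] (M : ℕ) :=
  Polynomial K ⧸ Ideal.span {(Polynomial.X : Polynomial K) ^ M}

/-- The diagonal map `Δ* : S → R`, the `K`-algebra map sending both `x₁` and `x₂` to `x`. -/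
noncomputable def deltaStar (K : Type*) [CommRing K] (M : ℕ) : Squot K M →ₐ[K] Rquot K M :=
  Ideal.Quotient.liftₐ _
    ((Ideal.Quotient.mkₐ K (Ideal.span {(Polynomial.X : Polynomial K) ^ M})).comp
      (MvPolynomial.aeval fun _ : Fin 2 => (Polynomial.X : Polynomial K)))
    (by
      intro a ha
      have hker : Ideal.span
          {(X 0 : MvPolynomial (Fin 2) K) ^ M, (X 1 : MvPolynomial (Fin 2) K) ^ M} ≤
          RingHom.ker ((Ideal.Quotient.mkₐ K
              (Ideal.span {(Polynomial.X : Polynomial K) ^ M})).comp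
            (MvPolynomial.aeval fun _ : Fin 2 => (Polynomial.X : Polynomial K))).toRingHom := by
        rw [Ideal.span_le]
        rintro x hx
        simp only [Set.mem_insert_iff, Set.mem_singleton_iff] at hx
        rcases hx with rfl | rfl <;>
          · simp only [SetLike.mem_coe, RingHom.mem_ker, AlgHom.toRingHom_eq_coe,
              RingHom.coe_coe, AlgHom.coe_comp, Function.comp_apply, map_pow,
              MvPolynomial.aeval_X, Ideal.Quotient.mkₐ_eq_mk]
            rw [← map_pow, Ideal.Quotient.eq_zero_iff_mem]
            exact Ideal.subset_span rfl
      exact hker ha)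

/-! `Δ*` sends `x₁^a x₂^b` to `x^(a+b)`, which is zero in `R` once `a + b ≥ M`, so every `f r` is
killed by these monomials. If `i + j ≤ M - 2`, the multiplier `x₁^(M-1-i) x₂^(M-1-j)` is one of
them, and it moves the coefficient of `x₁^i x₂^j` to that of `x₁^(M-1) x₂^(M-1)`, which no element
of the monomial ideal `(x₁^M, x₂^M)` has. -/

namespace MvPolynomial

variable {σ R : Type*} [CommSemiring R]

theorem X_pow_mul_X_pow_eq_monomial (i j : σ) (a b : ℕ) :
    (X i : MvPolynomial σ R) ^ a * X j ^ b =
      monomial (Finsupp.single i a + Finsupp.single j b) 1 := by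
  rw [X_pow_eq_monomial, X_pow_eq_monomial, monomial_mul, one_mul]

theorem coeff_eq_zero_of_mem_span_X_pow_pair {i j : σ} {m n : ℕ} {p : MvPolynomial σ R}
    (hp : p ∈ Ideal.span {X i ^ m, X j ^ n}) {d : σ →₀ ℕ} (hi : d i < m) (hj : d j < n) :
    coeff d p = 0 := by
  rw [X_pow_eq_monomial, X_pow_eq_monomial,
    ← Set.image_pair (fun s => monomial s (1 : R))] at hp
  by_contra hd
  obtain ⟨s, hs, hle⟩ := mem_ideal_span_monomial_image.mp hp d (mem_support_iff.mpr hd)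
  rcases hs with rfl | rfl
  · exact absurd (hle i) (by simpa using hi)
  · exact absurd (hle j) (by simpa using hj)

theorem coeff_eq_zero_of_monomial_mul_mem_span_X_pow_pair {i j : σ} {m n : ℕ}
    {p : MvPolynomial σ R} {d e : σ →₀ ℕ}
    (hp : monomial e 1 * p ∈ Ideal.span {X i ^ m, X j ^ n})
    (hi : (d + e) i < m) (hj : (d + e) j < n) :
    coeff d p = 0 := by
  simpa [add_comm d, coeff_monomial_mul] using coeff_eq_zero_of_mem_span_X_pow_pair hp hi hj

end MvPolynomial

def highDegreeMonomials (K : Type*) [CommRing K] (M : ℕ) : Set (Squot K M) :=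
  { s | ∃ i j : ℕ, M - 1 ≤ i + j ∧
    s = Ideal.Quotient.mk _ ((X 0 : MvPolynomial (Fin 2) K) ^ i * (X 1) ^ j) }

section

variable {K : Type*} [CommRing K] {M : ℕ}

theorem mk_monomial_mem_span_highDegreeMonomials {v : Fin 2 →₀ ℕ} (hv : M - 1 ≤ v 0 + v 1)
    (c : K) :
    Ideal.Quotient.mk _ (MvPolynomial.monomial v c) ∈
      Submodule.span K (highDegreeMonomials K M) := by
  rw [monomial_eq, Finsupp.prod_fintype _ _ fun _ => pow_zero _, Fin.prod_univ_two, map_mul,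
    ← algebraMap_eq, Ideal.Quotient.mk_algebraMap, ← Algebra.smul_def]
  exact Submodule.smul_mem _ _ (Submodule.subset_span ⟨v 0, v 1, hv, rfl⟩)

theorem mk_mem_span_highDegreeMonomials {U : MvPolynomial (Fin 2) K}
    (hU : ∀ v : Fin 2 →₀ ℕ, v 0 + v 1 + 2 ≤ M → coeff v U = 0) :
    Ideal.Quotient.mk _ U ∈ Submodule.span K (highDegreeMonomials K M) := by
  rw [U.as_sum, map_sum]
  refine Submodule.sum_mem _ fun v _ => ?_
  by_cases hv : M - 1 ≤ v 0 + v 1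
  · exact mk_monomial_mem_span_highDegreeMonomials hv _
  · rw [hU v (by omega), monomial_zero, map_zero]
    exact Submodule.zero_mem _

theorem mem_span_highDegreeMonomials_of_forall_mul_eq_zero (s : Squot K M)
    (hs : ∀ a b : ℕ, M ≤ a + b →
      Ideal.Quotient.mk _ ((X 0 : MvPolynomial (Fin 2) K) ^ a * X 1 ^ b) * s = 0) :
    s ∈ Submodule.span K (highDegreeMonomials K M) := by
  obtain ⟨U, rfl⟩ := Ideal.Quotient.mk_surjective s
  refine mk_mem_span_highDegreeMonomials fun v hv => ?_
  have hmem : MvPolynomial.monomial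
      (Finsupp.single 0 (M - 1 - v 0) + Finsupp.single 1 (M - 1 - v 1)) 1 * U ∈
        Ideal.span {(X 0 : MvPolynomial (Fin 2) K) ^ M, X 1 ^ M} := by
    rw [← X_pow_mul_X_pow_eq_monomial, ← Ideal.Quotient.eq_zero_iff_mem, map_mul]
    exact hs _ _ (by omega)
  refine coeff_eq_zero_of_monomial_mul_mem_span_X_pow_pair hmem ?_ ?_ <;>
    simp only [Finsupp.add_apply, Finsupp.single_eq_same, Finsupp.single_eq_of_ne, ne_eq,
      zero_ne_one, one_ne_zero, not_false_eq_true] <;> omega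

theorem deltaStar_mk (p : MvPolynomial (Fin 2) K) :
    deltaStar K M (Ideal.Quotient.mk _ p) =
      Ideal.Quotient.mk _ (aeval (fun _ => (Polynomial.X : Polynomial K)) p) :=
  rfl

theorem deltaStar_mk_X_pow_mul_X_pow (a b : ℕ) :
    deltaStar K M (Ideal.Quotient.mk _ ((X 0 : MvPolynomial (Fin 2) K) ^ a * X 1 ^ b)) =
      Ideal.Quotient.mk _ (Polynomial.X ^ (a + b)) := by
  simp [deltaStar_mk, pow_add]

theorem deltaStar_mk_X_pow_mul_X_pow_eq_zero {a b : ℕ} (hab : M ≤ a + b) :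
    deltaStar K M (Ideal.Quotient.mk _ ((X 0 : MvPolynomial (Fin 2) K) ^ a * X 1 ^ b)) = 0 := by
  rw [deltaStar_mk_X_pow_mul_X_pow, Ideal.Quotient.eq_zero_iff_mem, Ideal.mem_span_singleton]
  exact pow_dvd_pow _ hab

end

theorem transfer_coeff_vanish_general {K : Type*} [CommRing K] (M : ℕ)
    (f : Rquot K M →ₗ[K] Squot K M)
    (hf : ∀ (s : Squot K M) (r : Rquot K M), f (deltaStar K M s * r) = s * f r) :
    ∀ r : Rquot K M, f r ∈ Submodule.span K
      { s : Squot K M | ∃ i j : ℕ, M - 1 ≤ i + j ∧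
        s = Ideal.Quotient.mk _ ((X 0 : MvPolynomial (Fin 2) K) ^ i * (X 1) ^ j) } := by
  intro r
  refine mem_span_highDegreeMonomials_of_forall_mul_eq_zero (f r) fun a b hab => ?_
  rw [← hf, deltaStar_mk_X_pow_mul_X_pow_eq_zero hab, zero_mul, map_zero]

/-- Suppose `f : R → S` is `K`-linear and an `S`-module homomorphism in the sense that
`f(Δ*(s)·r) = s·f(r)`. Then for every `r`, `f r` lies in the `K`-span of the (images of
the) monomials `x₁^i x₂^j` with `i + j ≥ M − 1`; i.e. in the monomial basis
`{x₁^i x₂^j : 0 ≤ i,j ≤ M−1}` of `S`, the coefficient of `x₁^i x₂^j` in `f r`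
vanishes whenever `i + j ≤ M − 2`. -/
theorem transfer_coeff_vanish {K : Type*} [CommRing K] (M : ℕ) (hM : 1 ≤ M)
    (f : Rquot K M →ₗ[K] Squot K M)
    (hf : ∀ (s : Squot K M) (r : Rquot K M), f (deltaStar K M s * r) = s * f r) :
    ∀ r : Rquot K M, f r ∈ Submodule.span K
      { s : Squot K M | ∃ i j : ℕ, M - 1 ≤ i + j ∧
        s = Ideal.Quotient.mk _ ((X 0 : MvPolynomial (Fin 2) K) ^ i * (X 1) ^ j) } :=
  transfer_coeff_vanish_general M f hf
end
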